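/- Let n ≥ 4. In the group K_n, the subgroup Q = ⟨b, a^2 b^{2^{n-3}}⟩ has index two and is isomorphic to the quasi-abelian group QA_n; moreover K_n and Q each contain exactly three involutions. -/

import Mathlib

/-- The exponent `α` in the presentation of `K_n`: `α = -1` for `n` even, `α = 3` for
`n` odd. -/
def kAlpha (n : ℕ) : ℤ := if Even n then -1 else 3

/-- The relators of the group `K_n`:
`a^8 = 1`, `b^(2^(n-2)) = a^4`, `b * a * b⁻¹ = a^α`.
The generator `a` is encoded by `true` and `b` by `false`. -/
def kRels (n : ℕ) : Set (FreeGroup Bool) :=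
  {FreeGroup.of true ^ 8,
   FreeGroup.of false ^ 2 ^ (n - 2) * (FreeGroup.of true ^ 4)⁻¹,
   FreeGroup.of false * FreeGroup.of true * (FreeGroup.of false)⁻¹ *
     (FreeGroup.of true ^ kAlpha n)⁻¹}

/-- The group `K_n`, given by the presentation
`⟨a, b ∣ a^8 = 1, b^(2^(n-2)) = a^4, b a b⁻¹ = a^α⟩`, where `α = -1` if `n` is even
and `α = 3` if `n` is odd. -/
abbrev K (n : ℕ) : Type := PresentedGroup (kRels n)

/-- The generator `a` of `K_n`. -/
def ka (n : ℕ) : K n := PresentedGroup.of true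

/-- The generator `b` of `K_n`. -/
def kb (n : ℕ) : K n := PresentedGroup.of false

/-- The relators of the quasi-abelian group `QA_n`:
`x^(2^(n-1)) = 1`, `y^2 = 1`, `y * x * y⁻¹ = x^(2^(n-2)+1)`.
The generator `x` is encoded by `true` and `y` by `false`. -/
def qaRels (n : ℕ) : Set (FreeGroup Bool) :=
  {FreeGroup.of true ^ 2 ^ (n - 1),
   FreeGroup.of false ^ 2,
   FreeGroup.of false * FreeGroup.of true * (FreeGroup.of false)⁻¹ *
     (FreeGroup.of true ^ (2 ^ (n - 2) + 1))⁻¹}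

/-- The quasi-abelian group `QA_n`, given by the presentation
`⟨x, y ∣ x^(2^(n-1)) = y^2 = 1, y x y⁻¹ = x^(2^(n-2)+1)⟩`. -/
abbrev QA (n : ℕ) : Type := PresentedGroup (qaRels n)

/-- The generator `x` of `QA_n`. -/
def qx (n : ℕ) : QA n := PresentedGroup.of true

/-- The generator `y` of `QA_n`. -/
def qy (n : ℕ) : QA n := PresentedGroup.of false

/-!
Every element of `K_n` is `a^i b^j` with `i < 8` and `j < 2^(n-2)`, because `⟨a⟩` is normal and
`b^(2^(n-2)) = a^4`; so `|K_n| ≤ 2^(n+1)`. Conversely `K_n` maps onto a concrete model of order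
`2^(n+1)`, the semidirect product `ZMod 8 ⋊ ZMod 2^(n-1)` (with `b` acting by `α`) modulo the
central involution `a^4 b^(2^(n-2))`. Hence `K_n` is this model and the normal form is unique.

`Q` is the kernel of the parity character `a ↦ 1, b ↦ 0`, so it has index two. The assignment
`x ↦ b, y ↦ a² b^(2^(n-3))` respects the relations of `QA_n`, so `QA_n` maps onto `Q`, and this is
an isomorphism because `|QA_n| ≤ 2^n = |Q|`. Squaring `a^i b^j` in the model shows that the
involutions are `a^4`, `a^2 b^(2^(n-3))` and `a^6 b^(2^(n-3))`; all have even `a`-degree, so they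
lie in `Q`.
-/

open Subgroup

section Generation

variable {G : Type*} [Group G]

theorem exists_zpow_mul_zpow_eq {a b : G} (hG : closure {a, b} = ⊤) (ha : IsOfFinOrder a)
    (hba : b * a * b⁻¹ ∈ zpowers a) (g : G) : ∃ s t : ℤ, a ^ s * b ^ t = g := by
  have : Finite (zpowers a : Set G) := ha.finite_zpowers
  have hb : b ∈ normalizer (zpowers a : Set G) := mem_normalizer_fintype fun x hx => by
    obtain ⟨k, rfl⟩ := mem_zpowers_iff.mp hx
    obtain ⟨l, hl⟩ := mem_zpowers_iff.mp hba
    exact ⟨l * k, by simp only [← conj_zpow, ← hl, zpow_mul]⟩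
  have : (zpowers a).Normal := normalizer_eq_top_iff.mp <| top_le_iff.mp <| hG ▸
    closure_le _ |>.mpr <| Set.insert_subset (le_normalizer (mem_zpowers a)) (by simpa using hb)
  have hg : g ∈ zpowers a ⊔ zpowers b := by
    rw [zpowers_eq_closure, zpowers_eq_closure, ← Subgroup.closure_union,
      Set.singleton_union, hG]
    exact mem_top g
  obtain ⟨_, ⟨s, rfl⟩, _, ⟨t, rfl⟩, h⟩ := mem_sup_of_normal_left.mp hg
  exact ⟨s, t, h⟩

theorem surjective_pow_mul_pow {a b : G} {m k : ℕ} (hm : 0 < m) (hk : 0 < k) (ha : a ^ m = 1)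
    (hb : b ^ k ∈ zpowers a) (h : ∀ g : G, ∃ s t : ℤ, a ^ s * b ^ t = g) :
    Function.Surjective fun x : Fin m × Fin k => a ^ (x.1 : ℕ) * b ^ (x.2 : ℕ) := by
  intro g
  obtain ⟨s, t, rfl⟩ := h g
  obtain ⟨c, hc⟩ := mem_zpowers_iff.mp hb
  have hbt : b ^ t = a ^ (c * (t / k)) * b ^ (t % k) := by
    rw [zpow_mul, hc, ← zpow_natCast, ← zpow_mul, ← zpow_add, Int.mul_ediv_add_emod]
  have hmod {n : ℕ} (hn : 0 < n) (r : ℤ) : ((r % n).toNat : ℤ) = r % n :=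
    Int.toNat_of_nonneg (Int.emod_nonneg r (by omega))
  have hlt {n : ℕ} (hn : 0 < n) (r : ℤ) : (r % n).toNat < n := by
    have := Int.emod_lt_of_pos r (show (0 : ℤ) < n by omega)
    omega
  refine ⟨(⟨_, hlt hm (s + c * (t / k))⟩, ⟨_, hlt hk t⟩), ?_⟩
  simp only [← zpow_natCast, hmod hm, hmod hk, ← zpow_eq_zpow_emod' _ ha]
  rw [hbt, zpow_add, mul_assoc]

end Generation

namespace K

variable (n : ℕ)

theorem ka_pow_eight : ka n ^ 8 = 1 := by
  simpa [ka, PresentedGroup.of] using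
    PresentedGroup.one_of_mem (rels := kRels n) (Set.mem_insert _ _)

theorem kb_pow_eq_ka_pow_four : kb n ^ 2 ^ (n - 2) = ka n ^ 4 := by
  simpa [ka, kb, PresentedGroup.of, mul_inv_eq_one] using
    PresentedGroup.one_of_mem (rels := kRels n) (Set.mem_insert_of_mem _ (Set.mem_insert _ _))

theorem kb_conj_ka : kb n * ka n * (kb n)⁻¹ = ka n ^ kAlpha n := by
  simpa [ka, kb, PresentedGroup.of, mul_inv_eq_one] using
    PresentedGroup.one_of_mem (rels := kRels n)
      (Set.mem_insert_of_mem _ (Set.mem_insert_of_mem _ rfl))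

theorem closure_ka_kb : closure {ka n, kb n} = ⊤ := by
  rw [← PresentedGroup.closure_range_of]
  congr 1
  ext
  simp [ka, kb, or_comm]

theorem exists_zpow_mul_zpow_eq (g : K n) : ∃ s t : ℤ, ka n ^ s * kb n ^ t = g :=
  _root_.exists_zpow_mul_zpow_eq (closure_ka_kb n)
    (isOfFinOrder_iff_pow_eq_one.mpr ⟨8, by norm_num, ka_pow_eight n⟩)
    ⟨kAlpha n, (kb_conj_ka n).symm⟩ g

theorem surjective_pow_mul_pow :
    Function.Surjective fun x : Fin 8 × Fin (2 ^ (n - 2)) => ka n ^ (x.1 : ℕ) * kb n ^ (x.2 : ℕ) :=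
  _root_.surjective_pow_mul_pow (by norm_num) (by positivity) (ka_pow_eight n)
    ⟨4, by simp [kb_pow_eq_ka_pow_four]⟩ (exists_zpow_mul_zpow_eq n)

instance : Finite (K n) := Finite.of_surjective _ (surjective_pow_mul_pow n)

theorem kb_pow_eq_one (hn : 2 ≤ n) : kb n ^ 2 ^ (n - 1) = 1 := by
  rw [show n - 1 = n - 2 + 1 by omega, pow_succ, pow_mul, kb_pow_eq_ka_pow_four, ← pow_mul,
    ka_pow_eight]

theorem kb_conj_ka_sq : kb n * ka n ^ 2 * (kb n)⁻¹ = (ka n ^ 2)⁻¹ := by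
  rw [← conj_pow, kb_conj_ka, ← zpow_natCast, ← zpow_mul, ← zpow_natCast, ← zpow_neg,
    zpow_eq_zpow_emod' _ (ka_pow_eight n), zpow_eq_zpow_emod' (-_) (ka_pow_eight n)]
  unfold kAlpha
  split_ifs <;> rfl

theorem commute_kb_sq_ka_sq : Commute (kb n ^ 2) (ka n ^ 2) := by
  have h : MulAut.conj (kb n) (ka n ^ 2) = (ka n ^ 2)⁻¹ := kb_conj_ka_sq n
  have : MulAut.conj (kb n ^ 2) (ka n ^ 2) = ka n ^ 2 := by
    rw [pow_two (kb n), map_mul, MulAut.mul_apply, h, map_inv, h, inv_inv]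
  rwa [MulAut.conj_apply, mul_inv_eq_iff_eq_mul] at this

def kc : K n := ka n ^ 2 * kb n ^ 2 ^ (n - 3)

def Q : Subgroup (K n) := closure {kb n, kc n}

variable {n} in
theorem kc_sq (hn : 4 ≤ n) : kc n ^ 2 = 1 := by
  have hk : kb n ^ 2 ^ (n - 3) = (kb n ^ 2) ^ 2 ^ (n - 4) := by
    rw [← pow_mul, ← pow_succ', show n - 4 + 1 = n - 3 by omega]
  have he : 2 * (2 ^ (n - 4) * 2) = 2 ^ (n - 2) := by
    rw [← pow_succ, ← pow_succ']
    congr 1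
    omega
  rw [kc, hk, ((commute_kb_sq_ka_sq n).pow_left _).symm.mul_pow, ← pow_mul, ← pow_mul, ← pow_mul,
    he, kb_pow_eq_ka_pow_four, ← pow_add, ka_pow_eight]

theorem kc_conj_kb : kc n * kb n * (kc n)⁻¹ = kb n ^ (2 ^ (n - 2) + 1) := by
  have h : kb n * (ka n ^ 2)⁻¹ * (kb n)⁻¹ = ka n ^ 2 := by
    rw [← conj_inv, kb_conj_ka_sq, inv_inv]
  calc kc n * kb n * (kc n)⁻¹ = ka n ^ 2 * (kb n * (ka n ^ 2)⁻¹ * (kb n)⁻¹) * kb n := by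
        rw [kc]
        group
    _ = kb n ^ (2 ^ (n - 2) + 1) := by
        rw [h, ← pow_add, pow_succ (kb n), kb_pow_eq_ka_pow_four]

theorem kb_mem_Q : kb n ∈ Q n := subset_closure (Set.mem_insert _ _)

theorem ka_sq_mem_Q : ka n ^ 2 ∈ Q n := by
  have h : kc n ∈ Q n := subset_closure (Set.mem_insert_of_mem _ rfl)
  simpa [kc] using mul_mem h (inv_mem (pow_mem (kb_mem_Q n) (2 ^ (n - 3))))

variable {n} {G : Type*} [Group G] {a b : G}

def lift (h8 : a ^ 8 = 1) (hb : b ^ 2 ^ (n - 2) = a ^ 4) (hc : b * a * b⁻¹ = a ^ kAlpha n) :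
    K n →* G :=
  PresentedGroup.toGroup (f := fun x => cond x a b) <| by
    rintro r (rfl | rfl | rfl) <;> simp [h8, hb, hc]

@[simp] theorem lift_ka (h8 : a ^ 8 = 1) (hb : b ^ 2 ^ (n - 2) = a ^ 4)
    (hc : b * a * b⁻¹ = a ^ kAlpha n) : lift h8 hb hc (ka n) = a :=
  PresentedGroup.toGroup.of _

@[simp] theorem lift_kb (h8 : a ^ 8 = 1) (hb : b ^ 2 ^ (n - 2) = a ^ 4)
    (hc : b * a * b⁻¹ = a ^ kAlpha n) : lift h8 hb hc (kb n) = b :=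
  PresentedGroup.toGroup.of _

variable (n)

def parity : K n →* Multiplicative (ZMod 2) :=
  lift (a := Multiplicative.ofAdd 1) (b := 1) (by decide) (by rw [one_pow]; decide)
    (by unfold kAlpha; split_ifs <;> decide)

@[simp] theorem parity_ka : parity n (ka n) = Multiplicative.ofAdd 1 := lift_ka ..

@[simp] theorem parity_kb : parity n (kb n) = 1 := lift_kb ..

theorem ker_parity : (parity n).ker = Q n := by
  refine le_antisymm (fun g hg => ?_) (closure_le _ |>.mpr ?_)
  · obtain ⟨s, t, rfl⟩ := exists_zpow_mul_zpow_eq n g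
    obtain ⟨r, rfl⟩ : Even s := by
      simpa [← ofAdd_zsmul, ZMod.intCast_zmod_eq_zero_iff_dvd, even_iff_two_dvd] using hg
    rw [← two_mul, zpow_mul]
    exact mul_mem (zpow_mem (ka_sq_mem_Q n) r) (zpow_mem (kb_mem_Q n) t)
  · rintro _ (rfl | rfl)
    · simp
    · rw [SetLike.mem_coe, MonoidHom.mem_ker, kc, map_mul, map_pow, map_pow, parity_ka, parity_kb,
        one_pow, mul_one]
      decide

theorem index_Q : (Q n).index = 2 := by
  have hsurj : Function.Surjective (parity n) := by
    intro x
    obtain rfl | rfl : x = 1 ∨ x = Multiplicative.ofAdd 1 := by revert x; decide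
    exacts [⟨1, map_one _⟩, ⟨ka n, parity_ka n⟩]
  rw [← ker_parity, index_ker, MonoidHom.range_eq_top.mpr hsurj, card_top]
  simp

end K

namespace QA

variable (n : ℕ)

theorem qx_pow_eq_one : qx n ^ 2 ^ (n - 1) = 1 := by
  simpa [qx, PresentedGroup.of] using
    PresentedGroup.one_of_mem (rels := qaRels n) (Set.mem_insert _ _)

theorem qy_sq : qy n ^ 2 = 1 := by
  simpa [qy, PresentedGroup.of] using
    PresentedGroup.one_of_mem (rels := qaRels n) (Set.mem_insert_of_mem _ (Set.mem_insert _ _))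

theorem qy_conj_qx : qy n * qx n * (qy n)⁻¹ = qx n ^ (2 ^ (n - 2) + 1) := by
  simpa [qx, qy, PresentedGroup.of, mul_inv_eq_one] using
    PresentedGroup.one_of_mem (rels := qaRels n)
      (Set.mem_insert_of_mem _ (Set.mem_insert_of_mem _ rfl))

theorem closure_qx_qy : closure {qx n, qy n} = ⊤ := by
  rw [← PresentedGroup.closure_range_of]
  congr 1
  ext
  simp [qx, qy, or_comm]

theorem surjective_pow_mul_pow :
    Function.Surjective fun x : Fin (2 ^ (n - 1)) × Fin 2 => qx n ^ (x.1 : ℕ) * qy n ^ (x.2 : ℕ) :=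
  _root_.surjective_pow_mul_pow (by positivity) (by norm_num) (qx_pow_eq_one n)
    ⟨0, by simp [qy_sq]⟩ <|
    exists_zpow_mul_zpow_eq (closure_qx_qy n)
      (isOfFinOrder_iff_pow_eq_one.mpr ⟨2 ^ (n - 1), by positivity, qx_pow_eq_one n⟩)
      ⟨_, (zpow_natCast _ _).trans (qy_conj_qx n).symm⟩

instance : Finite (QA n) := Finite.of_surjective _ (surjective_pow_mul_pow n)

theorem card_le (hn : 1 ≤ n) : Nat.card (QA n) ≤ 2 ^ n := by
  have := Nat.card_le_card_of_surjective _ (surjective_pow_mul_pow n)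
  rwa [Nat.card_prod, Nat.card_fin, Nat.card_fin, ← pow_succ, Nat.sub_add_cancel hn] at this

variable {n} {G : Type*} [Group G] {x y : G}

def lift (hx : x ^ 2 ^ (n - 1) = 1) (hy : y ^ 2 = 1) (hc : y * x * y⁻¹ = x ^ (2 ^ (n - 2) + 1)) :
    QA n →* G :=
  PresentedGroup.toGroup (f := fun c => cond c x y) <| by
    rintro r (rfl | rfl | rfl) <;> simp [hx, hy, hc]

@[simp] theorem lift_qx (hx : x ^ 2 ^ (n - 1) = 1) (hy : y ^ 2 = 1)
    (hc : y * x * y⁻¹ = x ^ (2 ^ (n - 2) + 1)) : lift hx hy hc (qx n) = x :=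
  PresentedGroup.toGroup.of _

@[simp] theorem lift_qy (hx : x ^ 2 ^ (n - 1) = 1) (hy : y ^ 2 = 1)
    (hc : y * x * y⁻¹ = x ^ (2 ^ (n - 2) + 1)) : lift hx hy hc (qy n) = y :=
  PresentedGroup.toGroup.of _

theorem range_lift (hx : x ^ 2 ^ (n - 1) = 1) (hy : y ^ 2 = 1)
    (hc : y * x * y⁻¹ = x ^ (2 ^ (n - 2) + 1)) : (lift hx hy hc).range = closure {x, y} := by
  rw [MonoidHom.range_eq_map, ← closure_qx_qy, MonoidHom.map_closure, Set.image_pair, lift_qx,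
    lift_qy]

def toK (hn : 4 ≤ n) : QA n →* K n :=
  lift (K.kb_pow_eq_one n (by omega)) (K.kc_sq hn) (K.kc_conj_kb n)

theorem range_toK (hn : 4 ≤ n) : (toK hn).range = K.Q n :=
  range_lift ..

end QA

theorem kAlpha_sq (n : ℕ) : ((kAlpha n : ℤ) : ZMod 8) ^ 2 = 1 := by
  unfold kAlpha
  split_ifs <;> decide

theorem kAlpha_mul_four (n : ℕ) : ((kAlpha n : ℤ) : ZMod 8) * 4 = 4 := by
  unfold kAlpha
  split_ifs <;> decide

/-- In `K_{p+4}`, `b^j` acts on `⟨a⟩ ≅ ZMod 8` as multiplication by `α^j`; since `α² = 1`, this is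
additive in `j ∈ ZMod 2^(p+3)`. -/
def twist (p : ℕ) (j : ZMod (2 ^ (p + 3))) : ZMod 8 := (kAlpha (p + 4) : ZMod 8) ^ j.val

section Twist

variable {p : ℕ}

theorem twist_natCast (k : ℕ) : twist p k = (kAlpha (p + 4) : ZMod 8) ^ k := by
  have h : (kAlpha (p + 4) : ZMod 8) ^ 2 ^ (p + 3) = 1 := by
    rw [pow_succ', pow_mul, kAlpha_sq, one_pow]
  rw [twist, ZMod.val_natCast, ← pow_eq_pow_mod _ h]

theorem twist_add (j j' : ZMod (2 ^ (p + 3))) : twist p (j + j') = twist p j * twist p j' := by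
  rw [← ZMod.natCast_zmod_val j, ← ZMod.natCast_zmod_val j', ← Nat.cast_add, twist_natCast,
    twist_natCast, twist_natCast, pow_add]

@[simp] theorem twist_zero : twist p 0 = 1 := by
  simp [twist]

theorem twist_one : twist p 1 = (kAlpha (p + 4) : ZMod 8) := by
  simpa using twist_natCast (p := p) 1

theorem twist_two_mul (j : ZMod (2 ^ (p + 3))) : twist p (2 * j) = 1 := by
  rw [two_mul, twist_add, ← sq, twist, ← pow_mul, mul_comm, pow_mul, kAlpha_sq, one_pow]

theorem twist_two_pow_succ (k : ℕ) : twist p (2 ^ (k + 1)) = 1 := by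
  rw [pow_succ', twist_two_mul]

theorem twist_mul_four (j : ZMod (2 ^ (p + 3))) : twist p j * 4 = 4 := by
  rw [twist]
  induction j.val with
  | zero => simp
  | succ k ih => rw [pow_succ, mul_assoc, kAlpha_mul_four, ih]

end Twist

/-- `⟨i, j⟩` stands for `a^i b^j` in `ZMod 8 ⋊ ZMod 2^(p+3)`; `K_{p+4}` is the quotient of this
group by the central involution `z = a^4 b^(2^(p+2))`. -/
@[ext] structure KModel (p : ℕ) where
  i : ZMod 8
  j : ZMod (2 ^ (p + 3))

namespace KModel

variable {p : ℕ}

instance : Mul (KModel p) := ⟨fun w w' => ⟨w.i + twist p w.j * w'.i, w.j + w'.j⟩⟩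

instance : One (KModel p) := ⟨⟨0, 0⟩⟩

instance : Inv (KModel p) := ⟨fun w => ⟨-(twist p (-w.j) * w.i), -w.j⟩⟩

@[simp] theorem mul_i (w w' : KModel p) : (w * w').i = w.i + twist p w.j * w'.i := rfl
@[simp] theorem mul_j (w w' : KModel p) : (w * w').j = w.j + w'.j := rfl
@[simp] theorem one_i : (1 : KModel p).i = 0 := rfl
@[simp] theorem one_j : (1 : KModel p).j = 0 := rfl
@[simp] theorem inv_i (w : KModel p) : w⁻¹.i = -(twist p (-w.j) * w.i) := rfl
@[simp] theorem inv_j (w : KModel p) : w⁻¹.j = -w.j := rfl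

instance : Group (KModel p) where
  mul_assoc _ _ _ := by ext <;> simp only [mul_i, mul_j, twist_add] <;> ring
  one_mul _ := by ext <;> simp
  mul_one _ := by ext <;> simp
  inv_mul_cancel _ := by ext <;> simp

def ofI : Multiplicative (ZMod 8) →* KModel p where
  toFun x := ⟨x.toAdd, 0⟩
  map_one' := rfl
  map_mul' _ _ := by ext <;> simp

def ofJ : Multiplicative (ZMod (2 ^ (p + 3))) →* KModel p where
  toFun y := ⟨0, y.toAdd⟩
  map_one' := rfl
  map_mul' _ _ := by ext <;> simp

theorem ofI_zpow (k : ℤ) : (ofI (.ofAdd 1) : KModel p) ^ k = ⟨k, 0⟩ := by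
  rw [← map_zpow, ← ofAdd_zsmul, zsmul_one]
  rfl

theorem ofI_pow (k : ℕ) : (ofI (.ofAdd 1) : KModel p) ^ k = ⟨k, 0⟩ := by
  simpa using ofI_zpow (p := p) k

theorem ofJ_pow (k : ℕ) : (ofJ (.ofAdd 1) : KModel p) ^ k = ⟨0, k⟩ := by
  rw [← map_pow, ← ofAdd_nsmul, nsmul_one]
  rfl

theorem ofI_pow_mul_ofJ_pow (i j : ℕ) :
    (ofI (.ofAdd 1) : KModel p) ^ i * ofJ (.ofAdd 1) ^ j = ⟨i, j⟩ := by
  ext <;> simp [ofI_pow, ofJ_pow]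

variable (p) in
def z : KModel p := ⟨4, 2 ^ (p + 2)⟩

theorem two_pow_add_self : (2 ^ (p + 2) + 2 ^ (p + 2) : ZMod (2 ^ (p + 3))) = 0 := by
  rw [← two_mul, ← pow_succ']
  exact_mod_cast ZMod.natCast_self (2 ^ (p + 3))

theorem z_commute (w : KModel p) : Commute (z p) w := by
  ext <;> simp [z, twist_two_pow_succ, twist_mul_four, add_comm]

theorem orderOf_z : orderOf (z p) = 2 :=
  orderOf_eq_prime (by ext <;> simp [z, sq, twist_mul_four, two_pow_add_self]; decide)
    fun h => (by decide : (4 : ZMod 8) ≠ 0) (congrArg i h)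

instance : (zpowers (z p)).Normal :=
  ⟨fun _ hw g => by
    obtain ⟨k, rfl⟩ := mem_zpowers_iff.mp hw
    rwa [← ((z_commute g).zpow_left k).eq, mul_inv_cancel_right]⟩

theorem mem_zpowers_z_iff {w : KModel p} : w ∈ zpowers (z p) ↔ w = 1 ∨ w = z p := by
  constructor
  · intro hw
    obtain ⟨k, rfl⟩ := mem_zpowers_iff.mp hw
    rw [zpow_eq_zpow_emod' k (orderOf_z ▸ pow_orderOf_eq_one (z p))]
    rcases Int.emod_two_eq_zero_or_one k with h | h <;> simp [h]
  · rintro (rfl | rfl)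
    exacts [one_mem _, mem_zpowers _]

end KModel

abbrev KQuot (p : ℕ) := KModel p ⧸ zpowers (KModel.z p)

namespace KQuot

open KModel

variable {p : ℕ}

theorem mk_eq_one_iff (w : KModel p) : (w : KQuot p) = 1 ↔ w = 1 ∨ w = z p :=
  (QuotientGroup.eq_one_iff w).trans mem_zpowers_z_iff

variable (p)

theorem card : Nat.card (KQuot p) = 2 ^ (p + 5) := by
  have e : KModel p ≃ ZMod 8 × ZMod (2 ^ (p + 3)) :=
    ⟨fun w => (w.i, w.j), fun x => ⟨x.1, x.2⟩, fun _ => rfl, fun _ => rfl⟩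
  have h := card_eq_card_quotient_mul_card_subgroup (zpowers (z p))
  rw [Nat.card_congr e, Nat.card_prod, Nat.card_zmod, Nat.card_zmod, Nat.card_zpowers,
    orderOf_z, show 8 * 2 ^ (p + 3) = 2 ^ (p + 5) * 2 by ring] at h
  show Nat.card (KModel p ⧸ zpowers (z p)) = _
  omega

end KQuot

namespace K

open KModel

variable (p : ℕ)

def toQuot : K (p + 4) →* KQuot p :=
  lift (a := ((ofI (.ofAdd 1) : KModel p) : KQuot p))
    (b := ((ofJ (.ofAdd 1) : KModel p) : KQuot p))
    (by
      rw [← QuotientGroup.mk_pow, ofI_pow, ← QuotientGroup.mk_one]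
      rfl)
    (by
      show (_ : KQuot p) ^ 2 ^ (p + 2) = _
      rw [← QuotientGroup.mk_pow, ← QuotientGroup.mk_pow, ofI_pow, ofJ_pow,
        ← QuotientGroup.mk_mul_of_mem _ (mem_zpowers (z p))]
      congr 1
      ext <;> simp [z, twist_mul_four, two_pow_add_self])
    (by
      rw [← QuotientGroup.mk_mul, ← QuotientGroup.mk_inv, ← QuotientGroup.mk_mul,
        ← QuotientGroup.mk_zpow, ofI_zpow]
      congr 1
      ext <;> simp [ofI, ofJ, twist_one])

theorem toQuot_pow_mul_pow (i j : ℕ) :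
    toQuot p (ka _ ^ i * kb _ ^ j) = ((⟨i, j⟩ : KModel p) : KQuot p) := by
  simp [toQuot, ← ofI_pow_mul_ofJ_pow]

theorem toQuot_surjective : Function.Surjective (toQuot p) := by
  intro x
  induction x using QuotientGroup.induction_on with
  | H w => exact ⟨ka _ ^ w.i.val * kb _ ^ w.j.val, by simp [toQuot_pow_mul_pow]⟩

theorem card_eq : Nat.card (K (p + 4)) = 2 ^ (p + 5) := by
  refine le_antisymm ?_ (KQuot.card p ▸ Nat.card_le_card_of_surjective _ (toQuot_surjective p))
  have := Nat.card_le_card_of_surjective _ (surjective_pow_mul_pow (p + 4))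
  rwa [Nat.card_prod, Nat.card_fin, Nat.card_fin, show p + 4 - 2 = p + 2 by omega,
    show 8 * 2 ^ (p + 2) = 2 ^ (p + 5) by ring] at this

theorem bijective_pow_mul_pow : Function.Bijective
    fun x : Fin 8 × Fin (2 ^ (p + 2)) => ka (p + 4) ^ (x.1 : ℕ) * kb (p + 4) ^ (x.2 : ℕ) :=
  (Nat.bijective_iff_surjective_and_card _).mpr
    ⟨surjective_pow_mul_pow (p + 4), by
      rw [card_eq, Nat.card_prod, Nat.card_fin, Nat.card_fin]
      ring⟩

theorem toQuot_injective : Function.Injective (toQuot p) :=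
  ((Nat.bijective_iff_surjective_and_card _).mpr
    ⟨toQuot_surjective p, by rw [card_eq, KQuot.card]⟩).injective

theorem pow_mul_pow_sq_eq_one_iff {i j : ℕ} (hj : j < 2 ^ (p + 2)) :
    (ka (p + 4) ^ i * kb (p + 4) ^ j) ^ 2 = 1 ↔
      j = 0 ∧ (i + i : ZMod 8) = 0 ∨ j = 2 ^ (p + 1) ∧ (i + i : ZMod 8) = 4 := by
  have hp : 2 ^ (p + 2) = 2 * 2 ^ (p + 1) := pow_succ' 2 (p + 1)
  have hM : 2 ^ (p + 3) = 2 * 2 ^ (p + 2) := pow_succ' 2 (p + 2)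
  have h0 : (j + j : ZMod (2 ^ (p + 3))) = 0 ↔ j = 0 := by
    rw [← Nat.cast_add, ZMod.natCast_eq_zero_iff]
    refine ⟨fun h => ?_, fun h => by simp [h]⟩
    have := Nat.eq_zero_of_dvd_of_lt h (by omega)
    omega
  have h1 : (j + j : ZMod (2 ^ (p + 3))) = 2 ^ (p + 2) ↔ j = 2 ^ (p + 1) := by
    rw [← Nat.cast_add, show (2 ^ (p + 2) : ZMod (2 ^ (p + 3))) = ((2 ^ (p + 2) : ℕ) : ZMod _) by
      push_cast; rfl, ZMod.natCast_eq_natCast_iff', Nat.mod_eq_of_lt (by omega),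
      Nat.mod_eq_of_lt (by omega)]
    omega
  rw [← (toQuot_injective p).eq_iff, map_pow, map_one, toQuot_pow_mul_pow, ← QuotientGroup.mk_pow,
    KQuot.mk_eq_one_iff]
  simp only [KModel.ext_iff, sq, mul_i, mul_j, one_i, one_j, z, h0, h1]
  constructor
  · rintro (⟨hi, rfl⟩ | ⟨hi, rfl⟩)
    · exact Or.inl ⟨rfl, by simpa using hi⟩
    · exact Or.inr ⟨rfl, by simpa [twist_two_pow_succ] using hi⟩
  · rintro (⟨rfl, hi⟩ | ⟨rfl, hi⟩)
    · exact Or.inl ⟨by simpa using hi, rfl⟩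
    · exact Or.inr ⟨by simpa [twist_two_pow_succ] using hi, rfl⟩

theorem orderOf_pow_mul_pow_eq_two_iff (x : Fin 8 × Fin (2 ^ (p + 2))) :
    orderOf (ka (p + 4) ^ (x.1 : ℕ) * kb (p + 4) ^ (x.2 : ℕ)) = 2 ↔
      (x.1 : ℕ) = 4 ∧ (x.2 : ℕ) = 0 ∨
        ((x.1 : ℕ) = 2 ∨ (x.1 : ℕ) = 6) ∧ (x.2 : ℕ) = 2 ^ (p + 1) := by
  have hne : ka (p + 4) ^ (x.1 : ℕ) * kb (p + 4) ^ (x.2 : ℕ) = 1 ↔ x = (0, 0) :=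
    (bijective_pow_mul_pow p).injective.eq_iff' (by simp)
  obtain ⟨⟨i, hi⟩, ⟨j, hj⟩⟩ := x
  have h0 : (i + i : ZMod 8) = 0 ↔ i = 0 ∨ i = 4 := by interval_cases i <;> decide
  have h4 : (i + i : ZMod 8) = 4 ↔ i = 2 ∨ i = 6 := by interval_cases i <;> decide
  have : 0 < 2 ^ (p + 1) := by positivity
  rw [orderOf_eq_prime_iff, pow_mul_pow_sq_eq_one_iff p hj, Ne, hne, h0, h4]
  simp only [Prod.ext_iff, Fin.ext_iff, Fin.val_zero]
  omega

theorem involutions_eq_image : {g : K (p + 4) | orderOf g = 2} =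
    (fun x : Fin 8 × Fin (2 ^ (p + 2)) => ka (p + 4) ^ (x.1 : ℕ) * kb (p + 4) ^ (x.2 : ℕ)) ''
      {(4, 0), (2, ⟨2 ^ (p + 1), Nat.pow_lt_pow_succ one_lt_two⟩),
        (6, ⟨2 ^ (p + 1), Nat.pow_lt_pow_succ one_lt_two⟩)} := by
  ext g
  obtain ⟨x, rfl⟩ := (bijective_pow_mul_pow p).surjective g
  rw [(bijective_pow_mul_pow p).injective.mem_set_image, Set.mem_ofPred_eq,
    orderOf_pow_mul_pow_eq_two_iff]
  simp only [Set.mem_insert_iff, Set.mem_singleton_iff, Prod.ext_iff, Fin.ext_iff, Fin.val_zero]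
  omega

theorem card_involutions : Nat.card {g : K (p + 4) | orderOf g = 2} = 3 := by
  rw [involutions_eq_image, Nat.card_coe_set_eq,
    Set.ncard_image_of_injective _ (bijective_pow_mul_pow p).injective, Set.ncard_eq_three]
  exact ⟨_, _, _, by simp, by simp, by simp, rfl⟩

theorem mem_Q_of_orderOf_eq_two {g : K (p + 4)} (hg : orderOf g = 2) : g ∈ Q (p + 4) := by
  obtain ⟨x, rfl⟩ := (bijective_pow_mul_pow p).surjective g
  have hx : Even (x.1 : ℕ) := by
    rw [orderOf_pow_mul_pow_eq_two_iff] at hg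
    rcases hg with ⟨h, -⟩ | ⟨h | h, -⟩ <;> rw [h] <;> decide
  rw [← ker_parity, MonoidHom.mem_ker, map_mul, map_pow, map_pow, parity_ka, parity_kb, one_pow,
    mul_one, ← ofAdd_nsmul, nsmul_one, ofAdd_eq_one, ZMod.natCast_eq_zero_iff_even]
  exact hx

theorem card_involutions_Q : Nat.card {g : K (p + 4) | orderOf g = 2 ∧ g ∈ Q (p + 4)} = 3 := by
  simpa only [and_iff_left_of_imp (mem_Q_of_orderOf_eq_two p)] using card_involutions p

theorem card_Q : Nat.card (Q (p + 4)) = 2 ^ (p + 4) := by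
  have h := card_mul_index (Q (p + 4))
  rw [index_Q, card_eq, pow_succ] at h
  omega

theorem nonempty_Q_mulEquiv_QA : Nonempty (Q (p + 4) ≃* QA (p + 4)) := by
  have hn : 4 ≤ p + 4 := by omega
  have hcard : Nat.card (QA (p + 4)) = Nat.card (QA.toK hn).range := by
    refine le_antisymm ?_ (Nat.card_le_card_of_surjective _ (QA.toK hn).rangeRestrict_surjective)
    rw [QA.range_toK, card_Q]
    exact QA.card_le _ (by omega)
  have hinj : Function.Injective (QA.toK hn) := MonoidHom.rangeRestrict_injective_iff.mp
    ((Nat.bijective_iff_surjective_and_card _).mpr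
      ⟨(QA.toK hn).rangeRestrict_surjective, hcard⟩).injective
  exact ⟨(MulEquiv.subgroupCongr (QA.range_toK hn)).symm.trans (MonoidHom.ofInjective hinj).symm⟩

end K

/-- For `n ≥ 4`, the subgroup `Q = ⟨b, a² b^(2^(n-3))⟩` of `K_n` has index two and is
isomorphic to the quasi-abelian group `QA_n`; moreover `K_n` and `Q` each contain
exactly three involutions. -/
theorem stmt17 (n : ℕ) (hn : 4 ≤ n) :
    (Subgroup.closure {kb n, ka n ^ 2 * kb n ^ 2 ^ (n - 3)} : Subgroup (K n)).index = 2 ∧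
    Nonempty ((Subgroup.closure {kb n, ka n ^ 2 * kb n ^ 2 ^ (n - 3)} : Subgroup (K n)) ≃*
      QA n) ∧
    Nat.card {g : K n | orderOf g = 2} = 3 ∧
    Nat.card {g : K n | orderOf g = 2 ∧
      g ∈ Subgroup.closure {kb n, ka n ^ 2 * kb n ^ 2 ^ (n - 3)}} = 3 := by
  obtain ⟨p, rfl⟩ : ∃ p, n = p + 4 := ⟨n - 4, by omega⟩
  exact ⟨K.index_Q _, K.nonempty_Q_mulEquiv_QA p, K.card_involutions p, K.card_involutions_Q p⟩
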